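/- arXiv:1605.05743 — 2 statements merged into one kernel-verified Lean document; each statement's English description precedes it below -/
import Mathlib

section
/- Let X = {x₀, x₁, x₂, …} ⊂ ℝ where x₀ = 0 and xᵢ = −(1/4)ⁱ for i ≥ 1, equipped with the usual metric and usual order of ℝ. Define self-maps T and S of X by T(xᵢ) = xᵢ₊₂ and S(xᵢ) = xᵢ₊₁ for all i ∈ ℕ₀. Then: (a) T(X) ⊆ S(X); (b) T is S-increasing (Sx ≤ Sy implies Tx ≤ Ty); (c) |Tx − Ty| ≤ (1/4)·|Sx − Sy| for all x, y ∈ X; and (d) there is no x ∈ X with Sx = Tx, i.e. the pair (T,S) has no coincidence point (in particular no common fixed point). -/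
open Filter Topology

/-- A comparison function: `φ : [0,∞) → [0,∞)` increasing with `φ^[n] t → 0` for all `t > 0`. -/
def IsComparisonFn (φ : ℝ → ℝ) : Prop :=
  (∀ t, 0 ≤ t → 0 ≤ φ t) ∧
  (∀ s t, 0 ≤ s → s ≤ t → φ s ≤ φ t) ∧
  (∀ t, 0 < t → Tendsto (fun n => φ^[n] t) atTop (𝓝 0))

/-- A half-comparison function: a comparison function `ρ` such that `t ↦ ρ (2 t)`
is also a comparison function. -/
def IsHalfComparisonFn (ρ : ℝ → ℝ) : Prop :=
  IsComparisonFn ρ ∧ IsComparisonFn (fun t => ρ (2 * t))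

/-- Two elements are comparable in a preorder. -/
def CmpRel {X : Type*} [Preorder X] (a b : X) : Prop := a ≤ b ∨ b ≤ a

/-- `T` is `S`-increasing. -/
def SIncreasing {X : Type*} [Preorder X] (T S : X → X) : Prop :=
  ∀ x y, S x ≤ S y → T x ≤ T y

/-- `E` is `O̅`-complete: every increasing Cauchy sequence in `E` converges in `E`. -/
def OBarComplete {X : Type*} [MetricSpace X] [Preorder X] (E : Set X) : Prop :=
  ∀ u : ℕ → X, (∀ n, u n ∈ E) → Monotone u → CauchySeq u → ∃ z ∈ E, Tendsto u atTop (𝓝 z)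

/-- `(E,d,⪯)` is I-regular relative to `S`: every increasing sequence `{S xₙ}` in `E`
converging to some `S z` admits a subsequence whose terms are all comparable with `S z`,
and moreover `S z ⪯ S (S z)`. -/
def IRegularOn {X : Type*} [MetricSpace X] [Preorder X] (E : Set X) (S : X → X) : Prop :=
  ∀ (x : ℕ → X) (z : X), (∀ n, S (x n) ∈ E) → Monotone (fun n => S (x n)) →
    Tendsto (fun n => S (x n)) atTop (𝓝 (S z)) →
    ((∃ k : ℕ → ℕ, StrictMono k ∧ ∀ n, CmpRel (S (x (k n))) (S z)) ∧ S z ≤ S (S z))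

/-- The pair `(T,S)` is weakly compatible. -/
def WeaklyCompatible {X : Type*} (T S : X → X) : Prop :=
  ∀ x, S x = T x → S (T x) = T (S x)

/-- The set of coincidence points `C(T,S)` is `(T,S)`-directed. -/
def CoincTSDirected {X : Type*} [Preorder X] (T S : X → X) : Prop :=
  ∀ x y, S x = T x → S y = T y → ∃ z, CmpRel (T x) (S z) ∧ CmpRel (T y) (S z)

/-- The set of coincidence points `C(T,S)` is totally ordered by `⪯`. -/
def CoincTotallyOrdered {X : Type*} [Preorder X] (T S : X → X) : Prop :=
  ∀ x y, S x = T x → S y = T y → CmpRel x y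

/-- `T` is `(S,O̅)`-continuous. -/
def SOBarContinuous {X : Type*} [MetricSpace X] [Preorder X] (T S : X → X) : Prop :=
  ∀ (x : ℕ → X) (a : X), Monotone (fun n => S (x n)) →
    Tendsto (fun n => S (x n)) atTop (𝓝 (S a)) →
    Tendsto (fun n => T (x n)) atTop (𝓝 (T a))

/-- A self-map `f` is `O̅`-continuous. -/
def OBarContinuous {X : Type*} [MetricSpace X] [Preorder X] (f : X → X) : Prop :=
  ∀ (x : ℕ → X) (a : X), Monotone x → Tendsto x atTop (𝓝 a) →
    Tendsto (fun n => f (x n)) atTop (𝓝 (f a))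

/-- The pair `(T,S)` is `O̅`-compatible. -/
def OBarCompatible {X : Type*} [MetricSpace X] [Preorder X] (T S : X → X) : Prop :=
  ∀ (x : ℕ → X) (z : X), Monotone (fun n => S (x n)) → Monotone (fun n => T (x n)) →
    Tendsto (fun n => S (x n)) atTop (𝓝 z) → Tendsto (fun n => T (x n)) atTop (𝓝 z) →
    Tendsto (fun n => dist (S (T (x n))) (T (S (x n)))) atTop (𝓝 0)

/-- A comparable mapping maps comparable elements to comparable elements. -/
def ComparableMap {X : Type*} [Preorder X] (f : X → X) : Prop :=
  ∀ x y, CmpRel x y → CmpRel (f x) (f y)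

/-- Continuity of a 6-variable function on `[0,∞)⁶`. -/
def ContOnNonneg6 (F : ℝ → ℝ → ℝ → ℝ → ℝ → ℝ → ℝ) : Prop :=
  ContinuousOn
    (fun p : ℝ × ℝ × ℝ × ℝ × ℝ × ℝ => F p.1 p.2.1 p.2.2.1 p.2.2.2.1 p.2.2.2.2.1 p.2.2.2.2.2)
    (Set.Ici 0 ×ˢ Set.Ici 0 ×ˢ Set.Ici 0 ×ˢ Set.Ici 0 ×ˢ Set.Ici 0 ×ˢ Set.Ici 0)

/-- Condition (F1a): `F` is decreasing in the fifth variable and there is a comparison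
function `φ` such that `F(u,v,v,u,u+v,0) ≤ 0` implies `u ≤ φ v` for `u, v ≥ 0`. -/
def CondF1a (F : ℝ → ℝ → ℝ → ℝ → ℝ → ℝ → ℝ) : Prop :=
  (∀ t1 t2 t3 t4 t6, 0 ≤ t1 → 0 ≤ t2 → 0 ≤ t3 → 0 ≤ t4 → 0 ≤ t6 →
      AntitoneOn (fun t5 => F t1 t2 t3 t4 t5 t6) (Set.Ici 0)) ∧
  (∃ φ, IsComparisonFn φ ∧ ∀ u v, 0 ≤ u → 0 ≤ v → F u v v u (u + v) 0 ≤ 0 → u ≤ φ v)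

/-- Condition (F1b): `F` is decreasing in the fourth variable and there is a comparison
function `φ` such that `F(u,v,0,u+v,u,v) ≤ 0` implies `u ≤ φ v` for `u, v ≥ 0`. -/
def CondF1b (F : ℝ → ℝ → ℝ → ℝ → ℝ → ℝ → ℝ) : Prop :=
  (∀ t1 t2 t3 t5 t6, 0 ≤ t1 → 0 ≤ t2 → 0 ≤ t3 → 0 ≤ t5 → 0 ≤ t6 →
      AntitoneOn (fun t4 => F t1 t2 t3 t4 t5 t6) (Set.Ici 0)) ∧
  (∃ φ, IsComparisonFn φ ∧ ∀ u v, 0 ≤ u → 0 ≤ v → F u v 0 (u + v) u v ≤ 0 → u ≤ φ v)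

/-- Condition (F1c): `F` is decreasing in the third variable and there is a comparison
function `φ` such that `F(u,v,u+v,0,v,u) ≤ 0` implies `u ≤ φ v` for `u, v ≥ 0`. -/
def CondF1c (F : ℝ → ℝ → ℝ → ℝ → ℝ → ℝ → ℝ) : Prop :=
  (∀ t1 t2 t4 t5 t6, 0 ≤ t1 → 0 ≤ t2 → 0 ≤ t4 → 0 ≤ t5 → 0 ≤ t6 →
      AntitoneOn (fun t3 => F t1 t2 t3 t4 t5 t6) (Set.Ici 0)) ∧
  (∃ φ, IsComparisonFn φ ∧ ∀ u v, 0 ≤ u → 0 ≤ v → F u v (u + v) 0 v u ≤ 0 → u ≤ φ v)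

/-- Condition (F2): `F(u,u,0,0,u,u) > 0` for all `u > 0`. -/
def CondF2 (F : ℝ → ℝ → ℝ → ℝ → ℝ → ℝ → ℝ) : Prop :=
  ∀ u, 0 < u → 0 < F u u 0 0 u u


/-- The sequence `x₀ = 0`, `xᵢ = -(1/4)ⁱ` for `i ≥ 1`. -/
noncomputable def xseq : ℕ → ℝ := fun n => if n = 0 then 0 else -(1 / 4 : ℝ) ^ n

/-!
Since `x_{i+2} = x_{i+1} / 4` for every `i`, the map `T` is pointwise `S / 4` (as real numbers),
which gives (b) and (c) at once. A coincidence point would then satisfy `Sx = Sx / 4`, i.e.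
`Sx = 0 = x₀`, but `S` never takes the value `x₀`.
-/

lemma xseq_succ (n : ℕ) : xseq (n + 1) = -(1 / 4 : ℝ) ^ (n + 1) := if_neg n.succ_ne_zero

lemma xseq_succ_ne_zero (n : ℕ) : xseq (n + 1) ≠ 0 := by
  rw [xseq_succ]
  exact neg_ne_zero.mpr (pow_ne_zero _ (by norm_num))

lemma xseq_add_two (n : ℕ) : xseq (n + 2) = 1 / 4 * xseq (n + 1) := by
  rw [xseq_succ, xseq_succ]
  ring

/-- the counterexample to Theorem 2 of Berinde–Vetro. For the maps
`T(xᵢ) = xᵢ₊₂` and `S(xᵢ) = xᵢ₊₁` on `X = {x₀, x₁, x₂, …}`: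
(a) `T(X) ⊆ S(X)`; (b) `T` is `S`-increasing; (c) `|Tx − Ty| ≤ (1/4)·|Sx − Sy|`;
(d) the pair `(T,S)` has no coincidence point (hence no common fixed point). -/
theorem berinde_vetro_counterexample
    (T S : ↥(Set.range xseq) → ↥(Set.range xseq))
    (hT : ∀ n : ℕ, (T ⟨xseq n, ⟨n, rfl⟩⟩ : ℝ) = xseq (n + 2))
    (hS : ∀ n : ℕ, (S ⟨xseq n, ⟨n, rfl⟩⟩ : ℝ) = xseq (n + 1)) :
    (Set.range T ⊆ Set.range S) ∧
    (∀ a b : ↥(Set.range xseq), (S a : ℝ) ≤ (S b : ℝ) → (T a : ℝ) ≤ (T b : ℝ)) ∧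
    (∀ a b : ↥(Set.range xseq),
      |(T a : ℝ) - (T b : ℝ)| ≤ (1 / 4) * |(S a : ℝ) - (S b : ℝ)|) ∧
    (¬ ∃ a : ↥(Set.range xseq), S a = T a) := by
  have hTS : ∀ a, (T a : ℝ) = 1 / 4 * S a := by
    rintro ⟨_, n, rfl⟩
    rw [hT, hS, xseq_add_two]
  have hS_ne_zero : ∀ a, (S a : ℝ) ≠ 0 := by
    rintro ⟨_, n, rfl⟩
    rw [hS]
    exact xseq_succ_ne_zero n
  refine ⟨?_, fun a b hab => ?_, fun a b => ?_, ?_⟩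
  · rintro _ ⟨⟨_, n, rfl⟩, rfl⟩
    exact ⟨⟨xseq (n + 1), n + 1, rfl⟩, Subtype.ext (by rw [hS, hT])⟩
  · rw [hTS, hTS]
    linarith
  · rw [hTS, hTS, ← mul_sub, abs_mul, abs_of_pos (by norm_num : (0 : ℝ) < 1 / 4)]
  · rintro ⟨a, hSTa⟩
    have hSa : (S a : ℝ) = 1 / 4 * S a := (congrArg Subtype.val hSTa).trans (hTS a)
    exact hS_ne_zero a (by linarith)
end

section
/- Let (X,d,⪯) be an ordered metric space and E an O̅-complete subset of X. Let T, S be self-maps of X with T(X) ⊆ E ⊆ S(X) and T S-increasing. Suppose there exists a continuous function F : [0,∞)⁶ → ℝ satisfying conditions (F1a) and (F2) such that F(d(Tx,Ty), d(Sx,Sy), d(Sx,Tx), d(Sy,Ty), d(Sx,Ty), d(Sy,Tx)) ≤ 0 for all x, y ∈ X with Sx ⪯ Sy. Assume: there exists x₀ ∈ X with Sx₀ ⪯ Tx₀; T is (S,O̅)-continuous; (T,S) is weakly compatible; C(T,S) is totally ordered by ⪯; and at least one of T, S is a comparable mapping. Then (T,S) has a unique common fixed point z, and for any x₀ with Sx₀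 ⪯ Tx₀, every T-S-sequence {Txₙ} with initial point x₀ converges to z. -/
open Filter Topology

/-!
Along a T-S-sequence started at `S x₀ ⪯ T x₀` the points `S xₙ` increase, so the contractive
condition applies to consecutive terms; since `d(S xₙ, S xₙ₊₂) ≤ d(S xₙ, S xₙ₊₁) + d(S xₙ₊₁, S xₙ₊₂)`,
(F1a) gives `d(S xₙ₊₁, S xₙ₊₂) ≤ φ (d(S xₙ, S xₙ₊₁))`, and the consecutive distances tend to `0`.
If `(S xₙ)` were not Cauchy, the usual `ε`-subsequences and the continuity of `F` would give
`F(ε,ε,0,0,ε,ε) ≤ 0`, against (F2). Its limit in `E` is some `S v`; (S,O̅)-continuity makes `v` a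
coincidence point and weak compatibility makes `T v` another one. By (F2), comparable coincidence
points have equal values, and comparability is supplied by the total order on `C(T,S)`
together with the comparable map; hence `T v` is a common fixed point, and the only one.
-/

namespace IsComparisonFn

variable {φ : ℝ → ℝ}

theorem apply_lt (hφ : IsComparisonFn φ) {t : ℝ} (ht : 0 < t) : φ t < t := by
  by_contra! hle
  have hge : ∀ n, t ≤ φ^[n] t := by
    intro n
    induction n with
    | zero => rfl
    | succ n ih =>
      rw [Function.iterate_succ_apply']
      exact hle.trans (hφ.2.1 _ _ ht.le ih)
  have := ge_of_tendsto (hφ.2.2 t ht) (Eventually.of_forall hge)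
  linarith

theorem map_zero (hφ : IsComparisonFn φ) : φ 0 = 0 := by
  refine le_antisymm (le_of_forall_pos_lt_add fun t ht => ?_) (hφ.1 0 le_rfl)
  rw [zero_add]
  exact (hφ.2.1 0 t le_rfl ht.le).trans_lt (hφ.apply_lt ht)

theorem tendsto_iterate (hφ : IsComparisonFn φ) {t : ℝ} (ht : 0 ≤ t) :
    Tendsto (fun n => φ^[n] t) atTop (𝓝 0) := by
  rcases ht.lt_or_eq with ht | rfl
  · exact hφ.2.2 t ht
  · simp only [Function.iterate_fixed hφ.map_zero, tendsto_const_nhds]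

theorem tendsto_zero_of_le_apply (hφ : IsComparisonFn φ) {D : ℕ → ℝ} (hD : ∀ n, 0 ≤ D n)
    (hstep : ∀ n, D (n + 1) ≤ φ (D n)) : Tendsto D atTop (𝓝 0) := by
  have hle : ∀ n, D n ≤ φ^[n] (D 0) := by
    intro n
    induction n with
    | zero => rfl
    | succ n ih =>
      rw [Function.iterate_succ_apply']
      exact (hstep n).trans (hφ.2.1 _ _ (hD n) ih)
  exact squeeze_zero hD hle (hφ.tendsto_iterate (hD 0))

end IsComparisonFn

theorem ContinuousOn.nonpos_of_tendsto {α : Type*} [TopologicalSpace α] {f : α → ℝ} {s : Set α}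
    (hf : ContinuousOn f s) {p : ℕ → α} {q : α} (hq : q ∈ s) (hp : Tendsto p atTop (𝓝 q))
    (hps : ∀ k, p k ∈ s) (hle : ∀ k, f (p k) ≤ 0) : f q ≤ 0 :=
  le_of_tendsto ((hf q hq).tendsto.comp (tendsto_nhdsWithin_iff.mpr
    ⟨hp, Eventually.of_forall hps⟩)) (Eventually.of_forall hle)

section NonCauchy

variable {X : Type*} [PseudoMetricSpace X] {y : ℕ → X}

theorem exists_tendsto_dist_of_not_cauchySeq
    (hD : Tendsto (fun n => dist (y n) (y (n + 1))) atTop (𝓝 0)) (hy : ¬CauchySeq y) :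
    ∃ ε > 0, ∃ j : ℕ → ℕ, Tendsto (fun k => dist (y k) (y (k + j k))) atTop (𝓝 ε) := by
  rw [Metric.cauchySeq_iff'] at hy
  push Not at hy
  obtain ⟨ε, hε, hfar⟩ := hy
  have hex : ∀ k, ∃ i, ε ≤ dist (y k) (y (k + i)) := fun k => by
    obtain ⟨n, hn, hdist⟩ := hfar k
    exact ⟨n - k, by rwa [Nat.add_sub_cancel' hn, dist_comm]⟩
  refine ⟨ε, hε, fun k => Nat.find (hex k), ?_⟩
  -- By minimality of `Nat.find`, the index before the first one at distance `≥ ε` from `k` is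
  -- within `ε` of it.
  have hbound : ∀ k, dist (y k) (y (k + Nat.find (hex k)))
      ≤ ε + dist (y (k + (Nat.find (hex k) - 1))) (y (k + (Nat.find (hex k) - 1) + 1)) := by
    intro k
    have hpos : Nat.find (hex k) ≠ 0 := fun h0 => by
      have := Nat.find_spec (hex k)
      rw [h0, add_zero, dist_self] at this
      linarith
    have hprev := Nat.find_min (hex k) (Nat.sub_one_lt hpos)
    have htri := dist_triangle (y k) (y (k + (Nat.find (hex k) - 1)))
      (y (k + (Nat.find (hex k) - 1) + 1))
    rw [show k + (Nat.find (hex k) - 1) + 1 = k + Nat.find (hex k) by omega] at htri ⊢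
    linarith [not_le.mp hprev]
  have hshift : Tendsto (fun k => k + (Nat.find (hex k) - 1)) atTop atTop :=
    tendsto_atTop_mono (fun k => Nat.le_add_right k _) tendsto_id
  refine tendsto_of_tendsto_of_tendsto_of_le_of_le tendsto_const_nhds ?_
    (fun k => Nat.find_spec (hex k)) hbound
  simpa using tendsto_const_nhds.add (hD.comp hshift)

variable {a b : ℕ → ℕ} {ε : ℝ}

theorem tendsto_dist_succ_left (hD : Tendsto (fun n => dist (y n) (y (n + 1))) atTop (𝓝 0))
    (ha : Tendsto a atTop atTop) (hab : Tendsto (fun k => dist (y (a k)) (y (b k))) atTop (𝓝 ε)) :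
    Tendsto (fun k => dist (y (a k + 1)) (y (b k))) atTop (𝓝 ε) := by
  have hdiff : Tendsto (fun k => dist (y (a k + 1)) (y (b k)) - dist (y (a k)) (y (b k)))
      atTop (𝓝 0) := by
    refine squeeze_zero_norm (fun k => ?_) (hD.comp ha)
    rw [Real.norm_eq_abs]
    exact (abs_dist_sub_le _ _ (y (b k))).trans_eq (dist_comm _ _)
  simpa using hdiff.add hab

theorem tendsto_dist_succ_right (hD : Tendsto (fun n => dist (y n) (y (n + 1))) atTop (𝓝 0))
    (hb : Tendsto b atTop atTop) (hab : Tendsto (fun k => dist (y (a k)) (y (b k))) atTop (𝓝 ε)) :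
    Tendsto (fun k => dist (y (a k)) (y (b k + 1))) atTop (𝓝 ε) := by
  simpa only [dist_comm] using
    tendsto_dist_succ_left (b := a) hD hb (by simpa only [dist_comm] using hab)

end NonCauchy

def IsImplicitContraction {X : Type*} [MetricSpace X] [Preorder X]
    (F : ℝ → ℝ → ℝ → ℝ → ℝ → ℝ → ℝ) (T S : X → X) : Prop :=
  ∀ x y, S x ≤ S y →
    F (dist (T x) (T y)) (dist (S x) (S y)) (dist (S x) (T x)) (dist (S y) (T y))
      (dist (S x) (T y)) (dist (S y) (T x)) ≤ 0

def IsTSSequence {X : Type*} (T S : X → X) (x : ℕ → X) : Prop :=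
  ∀ n, S (x (n + 1)) = T (x n)

theorem exists_isTSSequence {X : Type*} {T S : X → X} (hTS : ∀ t, T t ∈ Set.range S) (x₀ : X) :
    ∃ x, x 0 = x₀ ∧ IsTSSequence T S x := by
  choose g hg using hTS
  exact ⟨fun n => g^[n] x₀, rfl, fun n => by simp only [Function.iterate_succ_apply', hg]⟩

theorem IsTSSequence.monotone {X : Type*} [Preorder X] {T S : X → X} {x : ℕ → X}
    (hx : IsTSSequence T S x) (hTS : SIncreasing T S) (h0 : S (x 0) ≤ T (x 0)) :
    Monotone fun n => S (x n) := by
  refine monotone_nat_of_le_succ fun n => ?_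
  induction n with
  | zero => rw [hx 0]; exact h0
  | succ n ih => rw [hx (n + 1), hx n]; exact hTS _ _ ih

section ImplicitContraction

variable {X : Type*} [MetricSpace X] [PartialOrder X] {T S : X → X}
  {F : ℝ → ℝ → ℝ → ℝ → ℝ → ℝ → ℝ}

namespace IsImplicitContraction

theorem eq_of_le_of_coincidence (hF2 : CondF2 F) (hcontr : IsImplicitContraction F T S)
    {a b : X} (ha : S a = T a) (hb : S b = T b) (hab : S a ≤ S b) : S a = S b := by
  by_contra hne
  have h := hcontr a b hab
  rw [← ha, ← hb, dist_self, dist_self, dist_comm (S b)] at h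
  exact h.not_gt (hF2 _ (dist_pos.mpr hne))

theorem eq_of_coincidence (hF2 : CondF2 F) (hcontr : IsImplicitContraction F T S)
    (htot : CoincTotallyOrdered T S) (hcmp : ComparableMap T ∨ ComparableMap S)
    {a b : X} (ha : S a = T a) (hb : S b = T b) : S a = S b := by
  have hab : CmpRel (S a) (S b) := by
    rcases hcmp with hT | hS
    · rw [ha, hb]
      exact hT a b (htot a b ha hb)
    · exact hS a b (htot a b ha hb)
  rcases hab with hab | hba
  · exact eq_of_le_of_coincidence hF2 hcontr ha hb hab
  · exact (eq_of_le_of_coincidence hF2 hcontr hb ha hba).symm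

theorem isFixedPt_of_coincidence (hF2 : CondF2 F) (hcontr : IsImplicitContraction F T S)
    (hwc : WeaklyCompatible T S) (htot : CoincTotallyOrdered T S)
    (hcmp : ComparableMap T ∨ ComparableMap S) {v : X} (hv : S v = T v) :
    S (T v) = T v ∧ T (T v) = T v := by
  have hw : S (T v) = T (T v) := by rw [hwc v hv, hv]
  have hSw : S (T v) = T v := by rw [← eq_of_coincidence hF2 hcontr htot hcmp hv hw, hv]
  exact ⟨hSw, hw ▸ hSw⟩

end IsImplicitContraction

namespace IsTSSequence

variable {x : ℕ → X}

theorem tendsto_dist_succ (hx : IsTSSequence T S x) (hcontr : IsImplicitContraction F T S)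
    (hF1a : CondF1a F) (hmono : Monotone fun n => S (x n)) :
    Tendsto (fun n => dist (S (x n)) (S (x (n + 1)))) atTop (𝓝 0) := by
  obtain ⟨hanti, φ, hφc, hφ⟩ := hF1a
  refine hφc.tendsto_zero_of_le_apply (fun _ => dist_nonneg) fun n => ?_
  have h := hcontr (x n) (x (n + 1)) (hmono n.le_succ)
  rw [← hx n, ← hx (n + 1), dist_self] at h
  refine hφ _ _ dist_nonneg dist_nonneg (le_trans ?_ h)
  exact hanti _ _ _ _ _ dist_nonneg dist_nonneg dist_nonneg dist_nonneg le_rfl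
    dist_nonneg (add_nonneg dist_nonneg dist_nonneg) ((dist_triangle _ _ _).trans_eq (add_comm _ _))

theorem cauchySeq (hx : IsTSSequence T S x) (hcontr : IsImplicitContraction F T S)
    (hFc : ContOnNonneg6 F) (hF2 : CondF2 F) (hmono : Monotone fun n => S (x n))
    (hD : Tendsto (fun n => dist (S (x n)) (S (x (n + 1)))) atTop (𝓝 0)) :
    CauchySeq fun n => S (x n) := by
  by_contra hnc
  obtain ⟨ε, hε, j, hb⟩ := exists_tendsto_dist_of_not_cauchySeq hD hnc
  have hk : Tendsto (fun k : ℕ => k) atTop atTop := tendsto_id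
  have hm : Tendsto (fun k => k + j k) atTop atTop :=
    tendsto_atTop_mono (fun k => Nat.le_add_right k _) tendsto_id
  have ha := tendsto_dist_succ_right hD hm (tendsto_dist_succ_left hD hk hb)
  have hc := tendsto_dist_succ_right hD hm hb
  have he : Tendsto (fun k => dist (S (x (k + j k))) (S (x (k + 1)))) atTop (𝓝 ε) := by
    simpa only [dist_comm] using tendsto_dist_succ_left hD hk hb
  refine (hF2 ε hε).not_ge (hFc.nonpos_of_tendsto (by simp [hε.le])
    (ha.prodMk_nhds (hb.prodMk_nhds ((hD.comp hk).prodMk_nhds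
      ((hD.comp hm).prodMk_nhds (hc.prodMk_nhds he))))) (fun k => by simp) fun k => ?_)
  have h := hcontr (x k) (x (k + j k)) (hmono (Nat.le_add_right k _))
  rwa [← hx k, ← hx (k + j k)] at h

theorem exists_coincidence_tendsto (hx : IsTSSequence T S x) {E : Set X} (hTE : ∀ x, T x ∈ E)
    (hES : E ⊆ Set.range S) (hE : OBarComplete E) (hScont : SOBarContinuous T S)
    (hmono : Monotone fun n => S (x n)) (hcauchy : CauchySeq fun n => S (x n)) :
    ∃ v, S v = T v ∧ Tendsto (fun n => T (x n)) atTop (𝓝 (T v)) := by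
  have hTx : (fun n => T (x n)) = fun n => S (x (n + 1)) := funext fun n => (hx n).symm
  have hTmono : Monotone fun n => T (x n) := by
    rw [hTx]
    exact fun a b h => hmono (Nat.succ_le_succ h)
  have hTcauchy : CauchySeq fun n => T (x n) := by
    rw [hTx]
    exact hcauchy.comp_tendsto (tendsto_add_atTop_nat 1)
  obtain ⟨z, hzE, hz⟩ := hE (fun n => T (x n)) (fun n => hTE (x n)) hTmono hTcauchy
  obtain ⟨v, rfl⟩ := hES hzE
  have hSx : Tendsto (fun n => S (x n)) atTop (𝓝 (S v)) :=
    (tendsto_add_atTop_iff_nat 1).mp (hTx ▸ hz)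
  have hTv := hScont x v hmono hSx
  exact ⟨v, tendsto_nhds_unique hz hTv, hTv⟩

theorem exists_common_fixedPt_tendsto (hx : IsTSSequence T S x) (h0 : S (x 0) ≤ T (x 0))
    {E : Set X} (hTE : ∀ x, T x ∈ E) (hES : E ⊆ Set.range S) (hTS : SIncreasing T S)
    (hFc : ContOnNonneg6 F) (hF1a : CondF1a F) (hF2 : CondF2 F)
    (hcontr : IsImplicitContraction F T S) (hE : OBarComplete E) (hScont : SOBarContinuous T S)
    (hwc : WeaklyCompatible T S) (htot : CoincTotallyOrdered T S)
    (hcmp : ComparableMap T ∨ ComparableMap S) :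
    ∃ z, S z = z ∧ T z = z ∧ Tendsto (fun n => T (x n)) atTop (𝓝 z) := by
  have hmono := hx.monotone hTS h0
  have hD := hx.tendsto_dist_succ hcontr hF1a hmono
  obtain ⟨v, hv, hlim⟩ := hx.exists_coincidence_tendsto hTE hES hE hScont hmono
    (hx.cauchySeq hcontr hFc hF2 hmono hD)
  obtain ⟨hSw, hTw⟩ := hcontr.isFixedPt_of_coincidence hF2 hwc htot hcmp hv
  exact ⟨T v, hSw, hTw, hlim⟩

end IsTSSequence

end ImplicitContraction

/-- unique common fixed point with `(S,O̅)`-continuity of `T`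
(Theorem 3.3, case (i)). -/
theorem unique_cfp_SOBar {X : Type*} [MetricSpace X] [PartialOrder X]
    (E : Set X) (T S : X → X)
    (hTE : ∀ x, T x ∈ E) (hES : E ⊆ Set.range S) (hTS : SIncreasing T S)
    (F : ℝ → ℝ → ℝ → ℝ → ℝ → ℝ → ℝ) (hFc : ContOnNonneg6 F)
    (hF1a : CondF1a F) (hF2 : CondF2 F)
    (hcontr : ∀ x y, S x ≤ S y →
      F (dist (T x) (T y)) (dist (S x) (S y)) (dist (S x) (T x)) (dist (S y) (T y))
        (dist (S x) (T y)) (dist (S y) (T x)) ≤ 0)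
    (hx0 : ∃ x₀, S x₀ ≤ T x₀)
    (hE : OBarComplete E)
    (hScont : SOBarContinuous T S)
    (hwc : WeaklyCompatible T S)
    (htot : CoincTotallyOrdered T S)
    (hcmp : ComparableMap T ∨ ComparableMap S) :
    ∃ z, S z = z ∧ T z = z ∧ (∀ w, S w = w → T w = w → w = z) ∧
      ∀ x : ℕ → X, S (x 0) ≤ T (x 0) → (∀ n, S (x (n + 1)) = T (x n)) →
        Tendsto (fun n => T (x n)) atTop (𝓝 z) := by
  have hlimit : ∀ x : ℕ → X, S (x 0) ≤ T (x 0) → IsTSSequence T S x →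
      ∃ z, S z = z ∧ T z = z ∧ Tendsto (fun n => T (x n)) atTop (𝓝 z) := fun x h0 hx =>
    hx.exists_common_fixedPt_tendsto h0 hTE hES hTS hFc hF1a hF2 hcontr hE hScont hwc htot hcmp
  obtain ⟨x₀, h₀⟩ := hx0
  obtain ⟨x, rfl, hx⟩ := exists_isTSSequence (fun t => hES (hTE t)) x₀
  obtain ⟨z, hSz, hTz, -⟩ := hlimit x h₀ hx
  have huniq : ∀ w, S w = w → T w = w → w = z := fun w hSw hTw => by
    simpa only [hSw, hSz] using IsImplicitContraction.eq_of_coincidence hF2 hcontr htot hcmp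
      (hSw.trans hTw.symm) (hSz.trans hTz.symm)
  refine ⟨z, hSz, hTz, huniq, fun x h0 hx => ?_⟩
  obtain ⟨z', hSz', hTz', hlim⟩ := hlimit x h0 hx
  rwa [huniq z' hSz' hTz'] at hlim
end
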